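/- For every natural number n ≥ 5, (n - 3) · (1 - 1/n)^{(n-1) · ln(n-3)} > 1, where the power is the real power (rpow) with exponent (n-1)·ln(n-3). -/

import Mathlib

theorem idle_ants_stmt_4 (n : ℕ) (hn : 5 ≤ n) :
    ((n : ℝ) - 3) * (1 - 1 / (n : ℝ)) ^ (((n : ℝ) - 1) * Real.log ((n : ℝ) - 3)) > 1 := by
  have hn5 : (5:ℝ) ≤ (n:ℝ) := by exact_mod_cast hn
  have hn0 : (0:ℝ) < n := by linarith
  have h3 : (1:ℝ) < (n:ℝ) - 3 := by linarith
  have hL : 0 < Real.log ((n:ℝ) - 3) := Real.log_pos h3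
  have hnm1 : (0:ℝ) < (n:ℝ) - 1 := by linarith
  have ha : (0:ℝ) < 1 - 1/(n:ℝ) := by
    rw [sub_pos, div_lt_one hn0]; linarith
  set x : ℝ := 1/((n:ℝ)-1) with hxdef
  have hx : 0 < x := by positivity
  have hexp : x + 1 < Real.exp x := Real.add_one_lt_exp (ne_of_gt hx)
  have h1 : Real.exp (-x) < 1 - 1/(n:ℝ) := by
    rw [Real.exp_neg]
    have hpos : (0:ℝ) < x + 1 := by linarith
    have : (Real.exp x)⁻¹ < (x+1)⁻¹ := by
      apply inv_strictAnti₀ hpos hexp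
    have heq : (x+1)⁻¹ = 1 - 1/(n:ℝ) := by
      rw [hxdef]
      field_simp
      ring
    linarith [heq ▸ this]
  have hln : -x < Real.log (1 - 1/(n:ℝ)) :=
    (Real.lt_log_iff_exp_lt ha).mpr h1
  have hmul : -Real.log ((n:ℝ)-3) <
      Real.log (1 - 1/(n:ℝ)) * (((n:ℝ) - 1) * Real.log ((n:ℝ) - 3)) := by
    have hpos : 0 < ((n:ℝ) - 1) * Real.log ((n:ℝ) - 3) := by positivity
    have := mul_lt_mul_of_pos_right hln hpos
    have hcalc : -x * (((n:ℝ) - 1) * Real.log ((n:ℝ) - 3)) = -Real.log ((n:ℝ)-3) := by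
      rw [hxdef]; field_simp
    linarith [hcalc ▸ this]
  have hrpow : (1 - 1/(n:ℝ)) ^ (((n:ℝ) - 1) * Real.log ((n:ℝ) - 3))
      > ((n:ℝ) - 3)⁻¹ := by
    rw [Real.rpow_def_of_pos ha]
    have : Real.exp (-Real.log ((n:ℝ)-3)) <
        Real.exp (Real.log (1 - 1/(n:ℝ)) * (((n:ℝ) - 1) * Real.log ((n:ℝ) - 3))) :=
      Real.exp_lt_exp.mpr hmul
    rwa [Real.exp_neg, Real.exp_log (by linarith : (0:ℝ) < (n:ℝ)-3)] at this
  have h30 : (0:ℝ) < (n:ℝ) - 3 := by linarith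
  have := mul_lt_mul_of_pos_left hrpow h30
  rwa [mul_inv_cancel₀ (ne_of_gt h30)] at this
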